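/- arXiv:2501.18060 — 5 statements merged into one kernel-verified Lean document; each statement's English description precedes it below -/
import Mathlib

section
/- For x > 1/2, the upper incomplete gamma function satisfies Γ(3/2, x) < ((2x + 1)/(2x − 1)) · sqrt(x) · e^{−x}. -/
/-!
Since `u + 1 ≤ exp u`, the integrand satisfies `t ^ a ≤ x ^ a * exp (a * (t / x - 1))` for `t ≥ x`,
so `Γ(a + 1, x)` is bounded by an exponential integral, equal to `x ^ a * exp (-x) / (1 - a / x)`.
For `a = 1/2` this is `2x / (2x - 1) * √x * exp (-x)`, and `2x < 2x + 1`.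
-/

open MeasureTheory Real

/-- The upper incomplete gamma function `Γ(s, x) = ∫_x^∞ t^(s−1) e^(−t) dt`. -/
noncomputable def upperIncompleteGamma (s x : ℝ) : ℝ :=
  ∫ t in Set.Ioi x, t ^ (s - 1) * Real.exp (-t)

namespace Real

theorem rpow_le_rpow_mul_exp {a x t : ℝ} (ha : 0 ≤ a) (hx : 0 < x) (ht : 0 ≤ t) :
    t ^ a ≤ x ^ a * exp (a * (t / x - 1)) := by
  have hratio : t / x ≤ exp (t / x - 1) := by linarith [add_one_le_exp (t / x - 1)]
  calc t ^ a = x ^ a * (t / x) ^ a := by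
        rw [← mul_rpow hx.le (by positivity), mul_div_cancel₀ t hx.ne']
    _ ≤ x ^ a * exp (t / x - 1) ^ a := by gcongr
    _ = x ^ a * exp (a * (t / x - 1)) := by rw [← exp_mul, mul_comm a]

theorem rpow_mul_exp_neg_le {a x t : ℝ} (ha : 0 ≤ a) (hx : 0 < x) (ht : 0 ≤ t) :
    t ^ a * exp (-t) ≤ x ^ a * exp (-a) * exp (-(1 - a / x) * t) := by
  calc t ^ a * exp (-t) ≤ x ^ a * exp (a * (t / x - 1)) * exp (-t) := by
        gcongr; exact rpow_le_rpow_mul_exp ha hx ht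
    _ = x ^ a * exp (-a) * exp (-(1 - a / x) * t) := by
        rw [mul_assoc, mul_assoc, ← exp_add, ← exp_add]; ring_nf

end Real

theorem upperIncompleteGamma_le {s x : ℝ} (hs : 1 ≤ s) (hx : s - 1 < x) :
    upperIncompleteGamma s x ≤ x ^ (s - 1) * exp (-x) / (1 - (s - 1) / x) := by
  have hx0 : 0 < x := by linarith
  have hc : 0 < 1 - (s - 1) / x := by
    rw [sub_pos, div_lt_one hx0]; exact hx
  have hint : IntegrableOn (fun t ↦ t ^ (s - 1) * exp (-t)) (Set.Ioi x) :=
    ((GammaIntegral_convergent (by linarith)).mono_set (Set.Ioi_subset_Ioi hx0.le)).congr_fun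
      (fun t _ ↦ mul_comm _ _) measurableSet_Ioi
  calc upperIncompleteGamma s x
      ≤ ∫ t in Set.Ioi x, x ^ (s - 1) * exp (-(s - 1)) * exp (-(1 - (s - 1) / x) * t) :=
        setIntegral_mono_on hint ((exp_neg_integrableOn_Ioi x hc).const_mul _) measurableSet_Ioi
          fun t ht ↦ rpow_mul_exp_neg_le (by linarith) hx0 (hx0.trans ht).le
    _ = x ^ (s - 1) * exp (-x) / (1 - (s - 1) / x) := by
        rw [integral_const_mul, integral_exp_mul_Ioi (by linarith), neg_div_neg_eq,
          mul_div_assoc', mul_assoc, ← exp_add]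
        congr 3
        field_simp
        ring

/-- For `x > 1/2`, `Γ(3/2, x) < ((2x + 1)/(2x − 1)) * sqrt x * exp (−x)`. -/
theorem upperIncompleteGamma_three_halves_lt
    (x : ℝ) (hx : 1 / 2 < x) :
    upperIncompleteGamma (3 / 2) x
      < ((2 * x + 1) / (2 * x - 1)) * Real.sqrt x * Real.exp (-x) := by
  have hx0 : 0 < x := by linarith
  calc upperIncompleteGamma (3 / 2) x ≤ x ^ (1 / 2 : ℝ) * exp (-x) / (1 - (1 / 2) / x) := by
        convert upperIncompleteGamma_le (s := 3 / 2) (x := x) (by norm_num) (by linarith)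
          using 3 <;> norm_num
    _ = (2 * x / (2 * x - 1)) * sqrt x * exp (-x) := by
        rw [← sqrt_eq_rpow]
        field_simp
    _ < ((2 * x + 1) / (2 * x - 1)) * sqrt x * exp (-x) := by
        gcongr <;> linarith
end

section
/- Let Y, Ỹ ∈ [K] with ρ_l = P(Y = l) > 0 and transition probabilities T_{kl} = P(Ỹ = k | Y = l) where Ỹ is conditionally independent of X given Y. Let F_l^k(t) = P(ŝ(X,k) ≤ t | Y = l). If for every l and every t, max_{k ≠ l} F_l^k(t) ≤ F_l^l(t), then for all t: Δ(t) := Σ_l ρ_l F_l^l(t) − Σ_l ρ_l Σ_k T_{kl} F_l^k(t) = Σ_l ρ_l (1 − T_{ll}) [F_l^l(t) − (weighted average of off-diagonal F_l^k(t))] ≥ 0. In particular Σ_l ρ_l F_l^l(t) ≥ Σ_l ρ_l Σ_k T_{kl} F_l^k(t). -/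
open MeasureTheory ProbabilityTheory

/-- If for every true label `l` the correct class has pointwise largest conditional score
CDF, i.e. `max_{k ≠ l} F_l^k(t) ≤ F_l^l(t)`, then the marginal coverage inflation factor
`Δ(t) = ∑_l ρ_l F_l^l(t) − ∑_l ρ_l ∑_k T_{kl} F_l^k(t)` is nonnegative; in particular
`∑_l ρ_l F_l^l(t) ≥ ∑_l ρ_l ∑_k T_{kl} F_l^k(t)` for all `t`. -/
theorem inflation_factor_nonneg
    {Ω 𝓧 : Type*} [MeasurableSpace Ω] [MeasurableSpace 𝓧]
    (P : Measure Ω) [IsProbabilityMeasure P]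
    (K : ℕ) (hK : 0 < K)
    (X : Ω → 𝓧) (Y Yt : Ω → Fin K)
    (hXmeas : Measurable X) (hYmeas : Measurable Y) (hYtmeas : Measurable Yt)
    (s : 𝓧 → Fin K → ℝ) (hs_meas : ∀ k, Measurable fun x => s x k)
    (hρpos : ∀ l, 0 < P {ω | Y ω = l})
    -- Ỹ is conditionally independent of X given Y
    (hcondindep : ∀ (A : Set 𝓧) (k l : Fin K), MeasurableSet A →
      P {ω | X ω ∈ A ∧ Y ω = l ∧ Yt ω = k} * P {ω | Y ω = l}
        = P {ω | X ω ∈ A ∧ Y ω = l} * P {ω | Y ω = l ∧ Yt ω = k})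
    -- ρ_l, T_{kl} = P(Ỹ=k | Y=l), and F_l^k(t) = P(ŝ(X,k) ≤ t | Y=l)
    (ρ : Fin K → ℝ) (hρ : ∀ l, ρ l = (P {ω | Y ω = l}).toReal)
    (T : Fin K → Fin K → ℝ)
    (hT : ∀ k l, T k l = (P[|{ω | Y ω = l}] {ω | Yt ω = k}).toReal)
    (F : Fin K → Fin K → ℝ → ℝ)
    (hF : ∀ l k t, F l k t = (P[|{ω | Y ω = l}] {ω | s (X ω) k ≤ t}).toReal)
    -- stochastic dominance: the correct class has the largest conditional CDF
    (hdom : ∀ (l : Fin K) (t : ℝ) (k : Fin K), k ≠ l → F l k t ≤ F l l t) :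
    ∀ t : ℝ,
      (0 ≤ ∑ l, ρ l * F l l t - ∑ l, ρ l * ∑ k, T k l * F l k t)
      ∧ ∑ l, ρ l * ∑ k, T k l * F l k t ≤ ∑ l, ρ l * F l l t := by
  intro t
  have key : ∀ l, ∑ k, T k l * F l k t ≤ F l l t := by
    intro l
    have hprob : IsProbabilityMeasure (P[|{ω | Y ω = l}]) :=
      cond_isProbabilityMeasure (hρpos l).ne'
    have hTnn : ∀ k, 0 ≤ T k l := fun k => by rw [hT]; exact ENNReal.toReal_nonneg
    have hsum : ∑ k, T k l = 1 := by
      have h1 : ∑ k : Fin K, (P[|{ω | Y ω = l}]) (Yt ⁻¹' {k}) = 1 := by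
        rw [sum_measure_preimage_singleton _
          (fun k _ => hYtmeas (measurableSet_singleton k))]
        simp
      have h2 : ∀ k : Fin K, (P[|{ω | Y ω = l}]) (Yt ⁻¹' {k}) ≠ ⊤ :=
        fun k => measure_ne_top _ _
      calc ∑ k, T k l = ∑ k : Fin K, ((P[|{ω | Y ω = l}]) (Yt ⁻¹' {k})).toReal := by
            refine Finset.sum_congr rfl fun k _ => ?_
            rw [hT]; rfl
        _ = (∑ k : Fin K, (P[|{ω | Y ω = l}]) (Yt ⁻¹' {k})).toReal :=
            (ENNReal.toReal_sum fun k _ => h2 k).symm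
        _ = 1 := by rw [h1]; simp
    have hdom' : ∀ k, F l k t ≤ F l l t := by
      intro k
      rcases eq_or_ne k l with h | h
      · subst h; exact le_refl _
      · exact hdom l t k h
    calc ∑ k, T k l * F l k t ≤ ∑ k, T k l * F l l t :=
          Finset.sum_le_sum fun k _ => mul_le_mul_of_nonneg_left (hdom' k) (hTnn k)
      _ = F l l t := by rw [← Finset.sum_mul, hsum, one_mul]
  have hρnn : ∀ l, 0 ≤ ρ l := fun l => by rw [hρ]; exact ENNReal.toReal_nonneg
  have main : ∑ l, ρ l * ∑ k, T k l * F l k t ≤ ∑ l, ρ l * F l l t :=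
    Finset.sum_le_sum fun l _ => mul_le_mul_of_nonneg_left (key l) (hρnn l)
  exact ⟨by linarith, main⟩
end

section
/- Under the conditional-independence contamination model with invertible transition matrix T (W = T^{-1}), the marginal coverage inflation factor satisfies Δ(t) = Σ_{k=1}^K Σ_{l=1}^K W_{kl} ρ̃_l F̃_l^k(t) − F̃(t) for all t ∈ [0,1], where ρ̃_l = P(Ỹ = l), F̃_l^k(t) = P(ŝ(X,k) ≤ t | Ỹ = l), F̃(t) = P(ŝ(X,Ỹ) ≤ t), and Δ(t) = P(ŝ(X,Y) ≤ t) − F̃(t). -/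
open MeasureTheory ProbabilityTheory

/-- Under the conditional-independence contamination model with invertible transition matrix
`T` (and `W = T⁻¹`), the marginal coverage inflation factor satisfies
`Δ(t) = ∑_k ∑_l W_{kl} ρ̃_l F̃_l^k(t) − F̃(t)` for all `t ∈ [0,1]`. -/
theorem inflation_factor_identity
    {Ω 𝓧 : Type*} [MeasurableSpace Ω] [MeasurableSpace 𝓧]
    (P : Measure Ω) [IsProbabilityMeasure P]
    (K : ℕ) (hK : 0 < K)
    (X : Ω → 𝓧) (Y Yt : Ω → Fin K)
    (hXmeas : Measurable X) (hYmeas : Measurable Y) (hYtmeas : Measurable Yt)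
    (s : 𝓧 → Fin K → ℝ) (hs_meas : ∀ k, Measurable fun x => s x k)
    (hρpos : ∀ l, 0 < P {ω | Y ω = l})
    (hρtpos : ∀ l, 0 < P {ω | Yt ω = l})
    -- Ỹ is conditionally independent of X given Y
    (hcondindep : ∀ (A : Set 𝓧) (k l : Fin K), MeasurableSet A →
      P {ω | X ω ∈ A ∧ Y ω = l ∧ Yt ω = k} * P {ω | Y ω = l}
        = P {ω | X ω ∈ A ∧ Y ω = l} * P {ω | Y ω = l ∧ Yt ω = k})
    -- transition matrix T_{kl} = P(Ỹ = k | Y = l), assumed invertible with inverse W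
    (T : Matrix (Fin K) (Fin K) ℝ)
    (hT : ∀ k l, T k l = (P[|{ω | Y ω = l}] {ω | Yt ω = k}).toReal)
    (W : Matrix (Fin K) (Fin K) ℝ) (hWT : W * T = 1) (hTW : T * W = 1)
    -- contaminated-label quantities ρ̃_l, F̃_l^k and F̃
    (ρt : Fin K → ℝ) (hρt : ∀ l, ρt l = (P {ω | Yt ω = l}).toReal)
    (Ft : Fin K → Fin K → ℝ → ℝ)
    (hFt : ∀ l k t, Ft l k t = (P[|{ω | Yt ω = l}] {ω | s (X ω) k ≤ t}).toReal)
    (Ftm : ℝ → ℝ) (hFtm : ∀ t, Ftm t = (P {ω | s (X ω) (Yt ω) ≤ t}).toReal) :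
    ∀ t ∈ Set.Icc (0 : ℝ) 1,
      (P {ω | s (X ω) (Y ω) ≤ t}).toReal - Ftm t
        = (∑ k, ∑ l, W k l * ρt l * Ft l k t) - Ftm t := by
  intro t ht
  congr 1
  -- measurability facts
  have hA : ∀ k : Fin K, MeasurableSet {ω | s (X ω) k ≤ t} := fun k =>
    ((hs_meas k).comp hXmeas) measurableSet_Iic
  have hY : ∀ m : Fin K, MeasurableSet {ω | Y ω = m} := fun m =>
    hYmeas (measurableSet_singleton m)
  have hYt : ∀ l : Fin K, MeasurableSet {ω | Yt ω = l} := fun l =>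
    hYtmeas (measurableSet_singleton l)
  -- partition lemma over Y
  have hpart : ∀ S : Set Ω, MeasurableSet S → P S = ∑ m, P (S ∩ {ω | Y ω = m}) := by
    intro S hS
    have hU : S = ⋃ m, S ∩ {ω | Y ω = m} := by
      ext ω; simp [Set.mem_iUnion]
    have hd : Pairwise (Function.onFun Disjoint fun m => S ∩ {ω | Y ω = m}) := by
      intro a b hab
      simp only [Function.onFun, Set.disjoint_left]
      rintro ω ⟨-, ha⟩ ⟨-, hb⟩
      exact hab (ha.symm.trans hb)
    conv_lhs => rw [hU]
    rw [measure_iUnion hd fun m => hS.inter (hY m), tsum_fintype]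
  have hne : ∀ S : Set Ω, P S ≠ ⊤ := fun S => measure_ne_top P S
  -- u k m = P(s(X)k ≤ t ∧ Y = m)
  set u : Fin K → Fin K → ℝ := fun k m =>
    (P ({ω | s (X ω) k ≤ t} ∩ {ω | Y ω = m})).toReal with hu
  -- conditional independence in real form
  have hci : ∀ k l m : Fin K,
      (P ({ω | s (X ω) k ≤ t} ∩ {ω | Y ω = m} ∩ {ω | Yt ω = l})).toReal
        = T l m * u k m := by
    intro k l m
    have h := hcondindep {x | s x k ≤ t} l m ((hs_meas k) measurableSet_Iic)
    have hYm : (P {ω | Y ω = m}).toReal ≠ 0 :=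
      (ENNReal.toReal_pos (hρpos m).ne' (hne _)).ne'
    have hset1 : {ω | X ω ∈ {x | s x k ≤ t} ∧ Y ω = m ∧ Yt ω = l}
        = {ω | s (X ω) k ≤ t} ∩ {ω | Y ω = m} ∩ {ω | Yt ω = l} := by
      ext ω
      simp only [Set.mem_setOf_eq, Set.mem_inter_iff, and_assoc]
    have hset2 : {ω | X ω ∈ {x | s x k ≤ t} ∧ Y ω = m}
        = {ω | s (X ω) k ≤ t} ∩ {ω | Y ω = m} := rfl
    rw [hset1, hset2] at h
    have h' := congrArg ENNReal.toReal h
    rw [ENNReal.toReal_mul, ENNReal.toReal_mul] at h'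
    have hTlm : T l m
        = (P {ω | Y ω = m ∧ Yt ω = l}).toReal / (P {ω | Y ω = m}).toReal := by
      rw [hT l m, cond_apply (hY m) P, ENNReal.toReal_mul, ENNReal.toReal_inv]
      have hs3 : {ω | Y ω = m} ∩ {ω | Yt ω = l} = {ω | Y ω = m ∧ Yt ω = l} := rfl
      rw [hs3, div_eq_inv_mul]
    rw [hTlm, div_mul_eq_mul_div, eq_div_iff hYm]
    linear_combination h'
  -- ρt l * Ft l k t = P({Yt = l} ∩ {s(X)k ≤ t}).toReal
  have hρF : ∀ l k : Fin K,
      ρt l * Ft l k t = (P ({ω | Yt ω = l} ∩ {ω | s (X ω) k ≤ t})).toReal := by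
    intro l k
    have hYtl : (P {ω | Yt ω = l}).toReal ≠ 0 :=
      (ENNReal.toReal_pos (hρtpos l).ne' (hne _)).ne'
    rw [hρt l, hFt l k t, cond_apply (hYt l) P, ENNReal.toReal_mul, ENNReal.toReal_inv]
    field_simp
  -- P({Yt=l} ∩ Aₖ) = ∑_m T l m * u k m
  have hsum : ∀ l k : Fin K,
      (P ({ω | Yt ω = l} ∩ {ω | s (X ω) k ≤ t})).toReal = ∑ m, T l m * u k m := by
    intro l k
    rw [hpart _ ((hYt l).inter (hA k)), ENNReal.toReal_sum (fun m _ => hne _)]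
    refine Finset.sum_congr rfl fun m _ => ?_
    rw [← hci k l m]
    have hsEq : {ω | Yt ω = l} ∩ {ω | s (X ω) k ≤ t} ∩ {ω | Y ω = m}
        = {ω | s (X ω) k ≤ t} ∩ {ω | Y ω = m} ∩ {ω | Yt ω = l} := by
      ext ω
      constructor
      · rintro ⟨⟨h1, h2⟩, h3⟩; exact ⟨⟨h2, h3⟩, h1⟩
      · rintro ⟨⟨h2, h3⟩, h1⟩; exact ⟨⟨h1, h2⟩, h3⟩
    rw [hsEq]
  -- RHS simplification
  have hRHS : (∑ k, ∑ l, W k l * ρt l * Ft l k t) = ∑ k, u k k := by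
    refine Finset.sum_congr rfl fun k _ => ?_
    calc ∑ l, W k l * ρt l * Ft l k t
        = ∑ l, ∑ m, W k l * (T l m * u k m) := by
          refine Finset.sum_congr rfl fun l _ => ?_
          rw [mul_assoc, hρF l k, hsum l k, Finset.mul_sum]
      _ = ∑ m, (∑ l, W k l * T l m) * u k m := by
          rw [Finset.sum_comm]
          refine Finset.sum_congr rfl fun m _ => ?_
          rw [Finset.sum_mul]
          exact Finset.sum_congr rfl fun l _ => (mul_assoc _ _ _).symm
      _ = ∑ m, (W * T) k m * u k m := by
          refine Finset.sum_congr rfl fun m _ => ?_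
          rw [Matrix.mul_apply]
      _ = u k k := by
          rw [hWT]
          simp [Matrix.one_apply]
  rw [hRHS]
  -- LHS: partition over Y
  have hSet : {ω | s (X ω) (Y ω) ≤ t}
      = ⋃ k, ({ω | s (X ω) k ≤ t} ∩ {ω | Y ω = k}) := by
    ext ω
    simp only [Set.mem_iUnion, Set.mem_inter_iff, Set.mem_setOf_eq]
    constructor
    · intro h; exact ⟨Y ω, h, rfl⟩
    · rintro ⟨k, h1, h2⟩; rw [h2]; exact h1
  have hS : MeasurableSet {ω | s (X ω) (Y ω) ≤ t} := by
    rw [hSet]; exact MeasurableSet.iUnion fun k => (hA k).inter (hY k)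
  rw [hpart _ hS, ENNReal.toReal_sum (fun m _ => hne _)]
  refine Finset.sum_congr rfl fun k _ => ?_
  have hsEq : {ω | s (X ω) (Y ω) ≤ t} ∩ {ω | Y ω = k}
      = {ω | s (X ω) k ≤ t} ∩ {ω | Y ω = k} := by
    ext ω
    simp only [Set.mem_inter_iff, Set.mem_setOf_eq]
    constructor
    · rintro ⟨h1, rfl⟩; exact ⟨h1, rfl⟩
    · rintro ⟨h1, rfl⟩; exact ⟨h1, rfl⟩
  rw [hsEq]
end

section
/- Fix ε ∈ [0,1) and ν ∈ [0,1], let K be even, write f = ε(1+ν), g = ε(1−ν), e = (ε(1+ν) − ε²(1−ν))/(1 − ε + f/2), p = (1/(1−ε)) · e/(1−ε+e/2), and h = (g/(1−ε)²) · (1 − f/(2(1−ε+f/2))) · (1 − e/(2(1−ε+e/2))). Then 0 ≤ h ≤ p and p − h ≤ 2ε/(1−ε). -/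
/-!
Both factors `1 - x / (2 (c + x/2))` of `h` collapse to `c / (c + x/2)` with `c = 1 - ε`, and the
two denominators `d₁ = 1 - ε + f/2`, `d₂ = 1 - ε + e/2` multiply out to `1 - ε + εν`. This gives
the closed forms `h = ε(1-ν) / (1 - ε + εν)` and `p - h = 2ε/(1-ε) · ν / (1 - ε + εν)`, and the
bounds follow from `ν ≤ 1 - ε + εν`, i.e. `0 ≤ (1-ε)(1-ν)`.
-/

theorem one_sub_div_two_mul_add_half {K : Type*} [Field K] [NeZero (2 : K)] (c x : K)
    (h : c + x / 2 ≠ 0) : 1 - x / (2 * (c + x / 2)) = c / (c + x / 2) := by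
  rw [eq_div_iff h, sub_mul, div_mul_eq_mul_div, mul_comm x, mul_comm 2, mul_div_mul_left _ _ h]
  ring

section TwoLevelRR

variable {ε ν f e : ℝ}

theorem two_level_rr_denom_mul (hf : f = ε * (1 + ν))
    (he : e * (1 - ε + f / 2) = ε * (1 + ν) - ε ^ 2 * (1 - ν)) :
    (1 - ε + f / 2) * (1 - ε + e / 2) = 1 - ε + ε * ν := by
  subst hf
  linear_combination he / 2

theorem two_level_rr_sub_eq {d₁ d₂ : ℝ} (hε : 1 - ε ≠ 0) (hd₁ : d₁ ≠ 0) (hd₂ : d₂ ≠ 0)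
    (he : e * d₁ = ε * (1 + ν) - ε ^ 2 * (1 - ν)) :
    1 / (1 - ε) * (e / d₂) - ε * (1 - ν) / (d₁ * d₂) = 2 * ε / (1 - ε) * (ν / (d₁ * d₂)) := by
  field_simp
  linear_combination he

end TwoLevelRR

/-- Bounds on the parameters of the inverse of the two-level randomized response transition
matrix: with `f = ε(1+ν)`, `g = ε(1−ν)`, `e = (ε(1+ν) − ε²(1−ν))/(1 − ε + f/2)`,
`p = (1/(1−ε)) · e/(1−ε+e/2)` and
`h = (g/(1−ε)²)(1 − f/(2(1−ε+f/2)))(1 − e/(2(1−ε+e/2)))`, one has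
`0 ≤ h ≤ p` and `p − h ≤ 2ε/(1−ε)`. -/
theorem two_level_rr_parameter_bounds
    (ε ν : ℝ) (hε : ε ∈ Set.Ico (0 : ℝ) 1) (hν : ν ∈ Set.Icc (0 : ℝ) 1)
    (f g e p h : ℝ)
    (hf : f = ε * (1 + ν))
    (hg : g = ε * (1 - ν))
    (he : e = (ε * (1 + ν) - ε ^ 2 * (1 - ν)) / (1 - ε + f / 2))
    (hp : p = (1 / (1 - ε)) * (e / (1 - ε + e / 2)))
    (hh : h = (g / (1 - ε) ^ 2) * (1 - f / (2 * (1 - ε + f / 2)))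
        * (1 - e / (2 * (1 - ε + e / 2)))) :
    0 ≤ h ∧ h ≤ p ∧ p - h ≤ 2 * ε / (1 - ε) := by
  obtain ⟨hε0, hε1⟩ := hε
  obtain ⟨hν0, hν1⟩ := hν
  have hr : 0 < 1 - ε := by linarith
  have hd₁ : 0 < 1 - ε + f / 2 := by rw [hf]; nlinarith
  have hed₁ : e * (1 - ε + f / 2) = ε * (1 + ν) - ε ^ 2 * (1 - ν) := by
    rw [he, div_mul_cancel₀ _ hd₁.ne']
  have hd₂ : 0 < 1 - ε + e / 2 := by
    have : 0 ≤ e := he ▸ div_nonneg (by nlinarith) hd₁.le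
    linarith
  have hD := two_level_rr_denom_mul hf hed₁
  have hD0 : 0 < 1 - ε + ε * ν := hD ▸ mul_pos hd₁ hd₂
  have h_eq : h = ε * (1 - ν) / (1 - ε + ε * ν) := by
    rw [hh, one_sub_div_two_mul_add_half _ _ hd₁.ne', one_sub_div_two_mul_add_half _ _ hd₂.ne',
      hg, ← hD]
    field_simp
  have p_sub_h : p - h = 2 * ε / (1 - ε) * (ν / (1 - ε + ε * ν)) := by
    rw [hp, h_eq, ← hD]
    exact two_level_rr_sub_eq hr.ne' hd₁.ne' hd₂.ne' hed₁
  have hc0 : 0 ≤ 2 * ε / (1 - ε) := by positivity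
  refine ⟨?_, ?_, ?_⟩
  · exact h_eq ▸ div_nonneg (mul_nonneg hε0 (sub_nonneg.2 hν1)) hD0.le
  · exact sub_nonneg.1 (p_sub_h ▸ mul_nonneg hc0 (div_nonneg hν0 hD0.le))
  · exact p_sub_h ▸ mul_le_of_le_one_right hc0 (div_le_one_of_le₀ (by nlinarith) hD0.le)
end

section
/- Let Z_1,...,Z_n be i.i.d., Ω ∈ ℝ^{K×K}, and for t ∈ [0,1] let h_t(Z) = Σ_{k} Ω_{k Ỹ} 1{ŝ(X,k) ≤ t} where Z = (X, Ỹ). Assume each marginal CDF F̃^k(t) = P(ŝ(X,k) ≤ t) is continuous and strictly increasing on [0,1]. Then for every ε ∈ (0,1] the class H = {h_t : t ∈ [0,1]} admits an η-cover in L²(P) of cardinality at most (K/ε)^{2K}, with η = ε · max_{k,l} |Ω_{kl}| / √2; here an η-cover is a set G such that for every t there is g ∈ G with E[(h_t(Z) − g(Z))²] ≤ η². -/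
/-! Cut `[0,1]` into `b` cells `[a_{k,j}, a_{k,j+1}]` of equal `F̃^k`-mass for every coordinate `k`
(intermediate values of the continuous CDF), and approximate `h_t` by replacing each indicator
`1{ŝ(X,k) ≤ t}` with the midpoint of the indicators at the two ends of the cell containing `t`
(strict monotonicity puts `t` in the cell its CDF value falls in). The error in coordinate `k` is
`±1/2` on the event `a_{k,j} < ŝ(X,k) ≤ a_{k,j+1}` of mass at most `1/b` and zero elsewhere, so
Cauchy–Schwarz bounds the squared `L²` error by `K² M² / (4b)`, where `M = max |Ω_{kl}|`. The
`b^K` choices of cells with `b ≈ K²/(2ε²)` form the cover. -/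

open MeasureTheory Set

theorem exists_lt_mem_Icc_succ {α : Type*} [LinearOrder α] (v : ℕ → α) {b : ℕ} (hb : 0 < b)
    {y : α} (hy : y ∈ Icc (v 0) (v b)) : ∃ m < b, y ∈ Icc (v m) (v (m + 1)) := by
  induction b with
  | zero => exact absurd hb (lt_irrefl 0)
  | succ n ih =>
    rcases Nat.eq_zero_or_pos n with rfl | hn
    · exact ⟨0, Nat.one_pos, hy⟩
    rcases le_or_gt y (v n) with hyn | hny
    · obtain ⟨m, hm, hmy⟩ := ih hn ⟨hy.1, hyn⟩
      exact ⟨m, by omega, hmy⟩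
    · exact ⟨n, n.lt_succ_self, hny.le, hy.2⟩

theorem exists_equal_increment_grid {F : ℝ → ℝ} {l r : ℝ} (hlr : l ≤ r)
    (hF_cont : ContinuousOn F (Icc l r)) (hF_mono : StrictMonoOn F (Icc l r)) {b : ℕ}
    (hb : 0 < b) :
    ∃ a : ℕ → ℝ, (∀ j < b, F (a (j + 1)) - F (a j) = (F r - F l) / b) ∧
      ∀ t ∈ Icc l r, ∃ m < b, t ∈ Icc (a m) (a (m + 1)) := by
  -- capping `j` at `b` keeps every level in `[F l, F r]`, so `choose` below yields a total `a`
  set level : ℕ → ℝ := fun j => F l + (min j b : ℕ) / b * (F r - F l) with hlevel_def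
  have hFlr : F l ≤ F r :=
    hF_mono.monotoneOn (left_mem_Icc.2 hlr) (right_mem_Icc.2 hlr) hlr
  have hlevel : ∀ j, level j ∈ Icc (F l) (F r) := by
    intro j
    have h0 : (0 : ℝ) ≤ (min j b : ℕ) / b := by positivity
    have h1 : ((min j b : ℕ) : ℝ) / b ≤ 1 :=
      div_le_one_of_le₀ (by exact_mod_cast min_le_right j b) (by positivity)
    constructor <;> nlinarith
  choose a ha hFa using fun j => intermediate_value_Icc hlr hF_cont (hlevel j)
  have hb' : (b : ℝ) ≠ 0 := by positivity
  refine ⟨a, fun j hj => ?_, fun t ht => ?_⟩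
  · simp only [hFa, hlevel_def, min_eq_left (show j + 1 ≤ b from hj), min_eq_left hj.le]
    field_simp
    push_cast
    ring
  · have hFt : F t ∈ Icc ((F ∘ a) 0) ((F ∘ a) b) := by
      simp [hFa, hlevel_def, hb']
      exact ⟨hF_mono.monotoneOn (left_mem_Icc.2 hlr) ht ht.1,
        hF_mono.monotoneOn ht (right_mem_Icc.2 hlr) ht.2⟩
    obtain ⟨m, hm, hFm⟩ := exists_lt_mem_Icc_succ (F ∘ a) hb hFt
    exact ⟨m, hm, (hF_mono.le_iff_le (ha m) ht).1 hFm.1, (hF_mono.le_iff_le ht (ha _)).1 hFm.2⟩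

theorem sq_ite_le_sub_midpoint {x a t a' : ℝ} (ha : a ≤ t) (ha' : t ≤ a') :
    ((if x ≤ t then (1 : ℝ) else 0) -
        ((if x ≤ a then 1 else 0) + (if x ≤ a' then 1 else 0)) / 2) ^ 2 =
      ((if x ≤ a' then (1 : ℝ) else 0) - (if x ≤ a then 1 else 0)) / 4 := by
  split_ifs <;> (try simp only [not_le] at *) <;> norm_num <;> linarith

theorem sq_sum_mul_le_card_mul {ι : Type*} (s : Finset ι) {w : ι → ℝ} (d : ι → ℝ) {M : ℝ}
    (hw : ∀ i ∈ s, |w i| ≤ M) :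
    (∑ i ∈ s, w i * d i) ^ 2 ≤ s.card * M ^ 2 * ∑ i ∈ s, d i ^ 2 := by
  calc (∑ i ∈ s, w i * d i) ^ 2 ≤ s.card * ∑ i ∈ s, (w i * d i) ^ 2 := sq_sum_le_card_mul_sum_sq
    _ ≤ s.card * ∑ i ∈ s, M ^ 2 * d i ^ 2 := by
      gcongr with i hi
      rw [mul_pow]
      exact mul_le_mul_of_nonneg_right (sq_le_sq.2 ((hw i hi).trans (le_abs_self M)))
        (sq_nonneg _)
    _ = s.card * M ^ 2 * ∑ i ∈ s, d i ^ 2 := by rw [← Finset.mul_sum, mul_assoc]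

theorem exists_nat_half_le_le {x : ℝ} (hx : 1 ≤ x) :
    ∃ b : ℕ, 0 < b ∧ x / 2 ≤ b ∧ (b : ℝ) ≤ x := by
  refine ⟨⌈x / 2⌉₊, Nat.ceil_pos.2 (by linarith), Nat.le_ceil _, ?_⟩
  rcases le_or_gt 2 x with h | h
  · linarith [Nat.ceil_lt_add_one (by linarith : 0 ≤ x / 2)]
  · have : ⌈x / 2⌉₊ ≤ 1 := Nat.ceil_le.2 (by norm_num; linarith)
    exact (Nat.cast_le_one.2 this).trans hx

theorem ite_le_eq_indicator {α : Type*} (f : α → ℝ) (c : ℝ) :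
    (fun z => if f z ≤ c then (1 : ℝ) else 0) = {z | f z ≤ c}.indicator 1 := by
  ext z
  simp [Set.indicator_apply]

section Integral

variable {α : Type*} [MeasurableSpace α] {μ : Measure α}

theorem integrable_ite_le [IsFiniteMeasure μ] {f : α → ℝ} (hf : Measurable f) (c : ℝ) :
    Integrable (fun z => if f z ≤ c then (1 : ℝ) else 0) μ := by
  rw [ite_le_eq_indicator]
  exact (integrable_const 1).indicator (measurableSet_le hf measurable_const)

theorem integral_ite_le {f : α → ℝ} (hf : Measurable f) (c : ℝ) :
    ∫ z, (if f z ≤ c then (1 : ℝ) else 0) ∂μ = μ.real {z | f z ≤ c} := by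
  rw [ite_le_eq_indicator, integral_indicator_one (measurableSet_le hf measurable_const)]

variable {ι : Type*} [Fintype ι]

theorem integral_sq_sub_midpoint_le [IsFiniteMeasure μ] {f : ι → α → ℝ}
    (hf : ∀ i, Measurable (f i)) {w : ι → α → ℝ} {M : ℝ} (hw : ∀ i z, |w i z| ≤ M) {t : ℝ}
    {lo hi : ι → ℝ} (hlo : ∀ i, lo i ≤ t) (hhi : ∀ i, t ≤ hi i) :
    ∫ z, ((∑ i, w i z * (if f i z ≤ t then (1 : ℝ) else 0)) -
        ∑ i, w i z * (((if f i z ≤ lo i then (1 : ℝ) else 0) +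
          (if f i z ≤ hi i then 1 else 0)) / 2)) ^ 2 ∂μ
      ≤ Fintype.card ι * M ^ 2 *
          ∑ i, (μ.real {z | f i z ≤ hi i} - μ.real {z | f i z ≤ lo i}) / 4 := by
  have hint : ∀ i c, Integrable (fun z => if f i z ≤ c then (1 : ℝ) else 0) μ :=
    fun i c => integrable_ite_le (hf i) c
  have hint_gap : ∀ i, Integrable (fun z => ((if f i z ≤ hi i then (1 : ℝ) else 0) -
      (if f i z ≤ lo i then 1 else 0)) / 4) μ :=
    fun i => ((hint i _).sub (hint i _)).div_const 4
  have hpt : ∀ z, ((∑ i, w i z * (if f i z ≤ t then (1 : ℝ) else 0)) -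
        ∑ i, w i z * (((if f i z ≤ lo i then (1 : ℝ) else 0) +
          (if f i z ≤ hi i then 1 else 0)) / 2)) ^ 2
      ≤ Fintype.card ι * M ^ 2 * ∑ i, ((if f i z ≤ hi i then (1 : ℝ) else 0) -
          (if f i z ≤ lo i then 1 else 0)) / 4 := by
    intro z
    rw [← Finset.sum_sub_distrib]
    simp_rw [← mul_sub]
    refine (sq_sum_mul_le_card_mul _ _ fun i _ => hw i z).trans_eq ?_
    simp_rw [sq_ite_le_sub_midpoint (hlo _) (hhi _), Finset.card_univ]
  calc _ ≤ ∫ z, Fintype.card ι * M ^ 2 * ∑ i, ((if f i z ≤ hi i then (1 : ℝ) else 0) -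
          (if f i z ≤ lo i then 1 else 0)) / 4 ∂μ :=
        integral_mono_of_nonneg (.of_forall fun z => sq_nonneg _)
          ((integrable_finsetSum _ fun i _ => hint_gap i).const_mul _)
          (.of_forall hpt)
    _ = _ := by
      rw [integral_const_mul, integral_finsetSum _ fun i _ => hint_gap i]
      congr 1
      refine Finset.sum_congr rfl fun i _ => ?_
      rw [integral_div, integral_sub (hint i _) (hint i _), integral_ite_le (hf i),
        integral_ite_le (hf i)]

theorem exists_cover_threshold_sums [IsProbabilityMeasure μ] {f : ι → α → ℝ}
    (hf : ∀ i, Measurable (f i))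
    (hF_cont : ∀ i, ContinuousOn (fun t => μ.real {z | f i z ≤ t}) (Icc 0 1))
    (hF_mono : ∀ i, StrictMonoOn (fun t => μ.real {z | f i z ≤ t}) (Icc 0 1))
    {w : ι → α → ℝ} {M : ℝ} (hw : ∀ i z, |w i z| ≤ M) {b : ℕ} (hb : 0 < b) :
    ∃ G : Finset (α → ℝ), G.card ≤ b ^ Fintype.card ι ∧ ∀ t ∈ Icc (0 : ℝ) 1, ∃ g ∈ G,
      ∫ z, ((∑ i, w i z * (if f i z ≤ t then (1 : ℝ) else 0)) - g z) ^ 2 ∂μ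
        ≤ Fintype.card ι ^ 2 * M ^ 2 / (4 * b) := by
  classical
  choose a ha_mass ha_cover using
    fun i => exists_equal_increment_grid zero_le_one (hF_cont i) (hF_mono i) hb
  set g : (ι → Fin b) → α → ℝ := fun j z => ∑ i, w i z *
    (((if f i z ≤ a i (j i) then (1 : ℝ) else 0) + (if f i z ≤ a i (j i + 1) then 1 else 0)) / 2)
  refine ⟨Finset.univ.image g, ?_, fun t ht => ?_⟩
  · simpa using Finset.card_image_le (s := Finset.univ) (f := g)
  choose m hm hmt using fun i => ha_cover i t ht
  refine ⟨g fun i => ⟨m i, hm i⟩, Finset.mem_image_of_mem _ (Finset.mem_univ _), ?_⟩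
  have hmass : ∀ i,
      μ.real {z | f i z ≤ a i (m i + 1)} - μ.real {z | f i z ≤ a i (m i)} ≤ 1 / b := by
    intro i
    rw [ha_mass i _ (hm i)]
    gcongr
    linarith [measureReal_le_one (μ := μ) (s := {z | f i z ≤ 1}),
      measureReal_nonneg (μ := μ) (s := {z | f i z ≤ 0})]
  calc _ ≤ Fintype.card ι * M ^ 2 *
          ∑ i, (μ.real {z | f i z ≤ a i (m i + 1)} - μ.real {z | f i z ≤ a i (m i)}) / 4 :=
        integral_sq_sub_midpoint_le hf hw (fun i => (hmt i).1) (fun i => (hmt i).2)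
    _ ≤ Fintype.card ι * M ^ 2 * ∑ _i : ι, 1 / (b : ℝ) / 4 := by
        gcongr with i
        exact hmass i
    _ = Fintype.card ι ^ 2 * M ^ 2 / (4 * b) := by
        simp only [Finset.sum_const, Finset.card_univ, nsmul_eq_mul]
        ring

end Integral

theorem covering_number_indicator_class_general
    {𝓧 : Type*} [MeasurableSpace 𝓧]
    (K : ℕ) (hK : 0 < K)
    (μ : Measure (𝓧 × Fin K)) [IsProbabilityMeasure μ]
    (Om : Fin K → Fin K → ℝ)
    (s : 𝓧 → Fin K → ℝ) (hs_meas : ∀ k, Measurable fun x => s x k)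
    (hcont : ∀ k : Fin K,
      ContinuousOn (fun t => (μ {z | s z.1 k ≤ t}).toReal) (Set.Icc (0 : ℝ) 1))
    (hmono : ∀ k : Fin K,
      StrictMonoOn (fun t => (μ {z | s z.1 k ≤ t}).toReal) (Set.Icc (0 : ℝ) 1)) :
    ∀ ε ∈ Set.Ioc (0 : ℝ) 1,
      ∃ G : Finset ((𝓧 × Fin K) → ℝ),
        (G.card : ℝ) ≤ ((K : ℝ) / ε) ^ (2 * K)
        ∧ ∀ t ∈ Set.Icc (0 : ℝ) 1, ∃ g ∈ G,
            ∫ z, ((∑ k, Om k z.2 * (if s z.1 k ≤ t then (1 : ℝ) else 0)) - g z) ^ 2 ∂μ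
              ≤ (ε * (Finset.univ.sup' ⟨(⟨0, hK⟩, ⟨0, hK⟩), Finset.mem_univ _⟩
                    fun kl : Fin K × Fin K => |Om kl.1 kl.2|) / Real.sqrt 2) ^ 2 := by
  rintro ε ⟨hε0, hε1⟩
  set M := Finset.univ.sup' ⟨(⟨0, hK⟩, ⟨0, hK⟩), Finset.mem_univ _⟩
    fun kl : Fin K × Fin K => |Om kl.1 kl.2|
  have hOm : ∀ k l, |Om k l| ≤ M := fun k l =>
    Finset.le_sup' (fun kl : Fin K × Fin K => |Om kl.1 kl.2|) (Finset.mem_univ (k, l))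
  have hKε : 1 ≤ ((K : ℝ) / ε) ^ 2 :=
    one_le_pow₀ ((one_le_div hε0).2 (hε1.trans (by exact_mod_cast hK)))
  obtain ⟨b, hb, hb_lo, hb_hi⟩ := exists_nat_half_le_le hKε
  obtain ⟨G, hG_card, hG⟩ := exists_cover_threshold_sums (μ := μ) (f := fun k z => s z.1 k)
    (w := fun k z => Om k z.2) (fun k => (hs_meas k).comp measurable_fst) hcont hmono
    (fun k z => hOm k z.2) hb
  rw [Fintype.card_fin] at hG_card hG
  refine ⟨G, ?_, fun t ht => ?_⟩
  · calc (G.card : ℝ) ≤ (b : ℝ) ^ K := by exact_mod_cast hG_card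
      _ ≤ (((K : ℝ) / ε) ^ 2) ^ K := by gcongr
      _ = ((K : ℝ) / ε) ^ (2 * K) := (pow_mul _ _ _).symm
  obtain ⟨g, hg, hgt⟩ := hG t ht
  refine ⟨g, hg, hgt.trans ?_⟩
  have hK_sq : (K : ℝ) ^ 2 ≤ 2 * b * ε ^ 2 := by
    rw [div_pow, div_div, div_le_iff₀ (by positivity)] at hb_lo
    linarith
  rw [div_pow, mul_pow, Real.sq_sqrt zero_le_two, div_le_div_iff₀ (by positivity) two_pos]
  nlinarith [mul_le_mul_of_nonneg_left hK_sq (sq_nonneg M)]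

/-- Covering-number bound for the class `H = {h_t : t ∈ [0,1]}`, where
`h_t(z) = ∑_k Ω_{k Ỹ} 1{ŝ(x,k) ≤ t}` for `z = (x, Ỹ)`: if every marginal CDF
`F̃^k(t) = P(ŝ(X,k) ≤ t)` is continuous and strictly increasing on `[0,1]`, then for every
`ε ∈ (0,1]` the class `H` admits an `η`-cover in `L²(P)` of cardinality at most
`(K/ε)^(2K)`, with `η = ε · max_{k,l} |Ω_{kl}| / √2`. -/
theorem covering_number_indicator_class
    {𝓧 : Type*} [MeasurableSpace 𝓧]
    (K : ℕ) (hK : 0 < K)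
    (μ : Measure (𝓧 × Fin K)) [IsProbabilityMeasure μ]
    (Om : Fin K → Fin K → ℝ)
    (s : 𝓧 → Fin K → ℝ) (hs_meas : ∀ k, Measurable fun x => s x k)
    (hs_range : ∀ x k, s x k ∈ Set.Icc (0 : ℝ) 1)
    (hcont : ∀ k : Fin K,
      ContinuousOn (fun t => (μ {z | s z.1 k ≤ t}).toReal) (Set.Icc (0 : ℝ) 1))
    (hmono : ∀ k : Fin K,
      StrictMonoOn (fun t => (μ {z | s z.1 k ≤ t}).toReal) (Set.Icc (0 : ℝ) 1)) :
    ∀ ε ∈ Set.Ioc (0 : ℝ) 1,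
      ∃ G : Finset ((𝓧 × Fin K) → ℝ),
        (G.card : ℝ) ≤ ((K : ℝ) / ε) ^ (2 * K)
        ∧ ∀ t ∈ Set.Icc (0 : ℝ) 1, ∃ g ∈ G,
            ∫ z, ((∑ k, Om k z.2 * (if s z.1 k ≤ t then (1 : ℝ) else 0)) - g z) ^ 2 ∂μ
              ≤ (ε * (Finset.univ.sup' ⟨(⟨0, hK⟩, ⟨0, hK⟩), Finset.mem_univ _⟩
                    fun kl : Fin K × Fin K => |Om kl.1 kl.2|) / Real.sqrt 2) ^ 2 :=
  covering_number_indicator_class_general K hK μ Om s hs_meas hcont hmono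
end
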